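/- For every set Γ and every real number p with 1 ≤ p < ∞, the space ℓ_p(Γ) has the separable complementation property: every separable closed subspace of ℓ_p(Γ) is contained in a separable closed subspace that is the range of a continuous linear projection on ℓ_p(Γ). -/

import Mathlib

open scoped ENNReal

noncomputable section

/-- The density character of a topological space: the least cardinality of a dense subset. -/
def densChar (X : Type u) [TopologicalSpace X] : Cardinal.{u} :=
  sInf { c : Cardinal | ∃ s : Set X, Dense s ∧ Cardinal.mk s = c }

/-- A Banach space `X` has the separable complementation property (SCP) if every separable
closed subspace of `X` is contained in a separable closed subspace that is the range of a
continuous linear projection on `X`. -/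
def HasSCP (X : Type*) [NormedAddCommGroup X] [NormedSpace ℝ X] : Prop :=
  ∀ E : Submodule ℝ X, IsClosed (E : Set X) → TopologicalSpace.IsSeparable (E : Set X) →
    ∃ F : Submodule ℝ X, E ≤ F ∧ IsClosed (F : Set X) ∧
      TopologicalSpace.IsSeparable (F : Set X) ∧
      ∃ P : X →L[ℝ] X, P.comp P = P ∧ LinearMap.range (P : X →ₗ[ℝ] X) = F

/-- A Banach space `X` has the separable extension property (SEP) if for every separable closed
subspace `E` of `X` there is a continuous linear operator `T : X → X` with separable range
fixing `E` pointwise. -/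
def HasSEP (X : Type*) [NormedAddCommGroup X] [NormedSpace ℝ X] : Prop :=
  ∀ E : Submodule ℝ X, IsClosed (E : Set X) → TopologicalSpace.IsSeparable (E : Set X) →
    ∃ T : X →L[ℝ] X, TopologicalSpace.IsSeparable (Set.range T) ∧ ∀ x ∈ E, T x = x

/-!
Every element of `ℓ_p(Γ)` with `p < ∞` has countable support, so a separable subspace lives on
a countable set `S` of coordinates. Restricting to `S` is a norm-one projection; its range, the
elements supported in `S`, is closed, and separable because it is the closure of the finite sums
of coordinate vectors over `S`.
-/

open Function TopologicalSpace

theorem Memℓp.countable_support {α E : Type*} [NormedAddCommGroup E] {p : ℝ≥0∞}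
    {f : α → E} (hf : Memℓp f p) (hp : p ≠ ∞) : (support f).Countable := by
  rcases p.trichotomy with rfl | rfl | hp'
  · exact hf.finite_dsupport.countable
  · exact (hp rfl).elim
  · convert (hf.summable hp').countable_support using 1
    ext i
    simp [Real.rpow_eq_zero (norm_nonneg _) hp'.ne']

theorem Memℓp.indicator {α E : Type*} [NormedAddCommGroup E] {p : ℝ≥0∞} {f : α → E}
    (hf : Memℓp f p) (s : Set α) : Memℓp (s.indicator f) p :=
  hf.mono' (norm_indicator_le_norm_self f)

namespace lp

variable {α 𝕜 E : Type*} [NormedAddCommGroup E] {p : ℝ≥0∞} [Fact (1 ≤ p)]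

theorem isClosed_setOf_support_subset (s : Set α) :
    IsClosed {x : lp (fun _ : α => E) p | support x ⊆ s} := by
  have : {x : lp (fun _ : α => E) p | support x ⊆ s} = ⋂ i ∈ sᶜ, {x | x i = 0} := by
    ext x
    simp only [Set.mem_ofPred_eq, Set.mem_iInter, Set.mem_compl_iff, support_subset_iff']
  rw [this]
  exact isClosed_biInter fun i _ => isClosed_eq (lipschitzWith_one_eval p i).continuous
    continuous_const

theorem isSeparable_setOf_support_subset [SeparableSpace E] (hp : p ≠ ∞) {s : Set α}
    (hs : s.Countable) : IsSeparable {x : lp (fun _ : α => E) p | support x ⊆ s} := by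
  classical
  have := hs.to_subtype
  set D := ⋃ i : s, Set.range (lp.single (E := fun _ : α => E) p i)
  have hD : IsSeparable D := .iUnion fun i => isSeparable_range (isometry_single _).continuous
  -- `ℕ`-linear combinations are sums, so `Submodule.span ℕ D` is the additive closure of `D`
  refine (hD.span (R := ℕ)).closure.mono fun x hx => ?_
  refine mem_closure_of_tendsto (lp.hasSum_single hp x) (.of_forall fun t => ?_)
  refine Submodule.sum_mem _ fun i _ => ?_
  by_cases hi : i ∈ s
  · exact Submodule.subset_span (Set.mem_iUnion.2 ⟨⟨i, hi⟩, x i, rfl⟩)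
  · rw [notMem_support.1 fun h => hi (hx h), lp.single_zero]
    exact Submodule.zero_mem _

variable [NormedField 𝕜] [NormedSpace 𝕜 E]

variable (𝕜 E p) in
def indicatorCLM (s : Set α) : lp (fun _ : α => E) p →L[𝕜] lp (fun _ : α => E) p :=
  LinearMap.mkContinuous
    { toFun x := ⟨s.indicator x, (lp.memℓp x).indicator s⟩
      map_add' x y := lp.ext (Set.indicator_add' s x y)
      map_smul' c x := lp.ext (Set.indicator_const_smul s c x) }
    1 fun x => by
      simpa using norm_mono (zero_lt_one.trans_le Fact.out).ne' (norm_indicator_le_norm_self x)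

variable {s : Set α}

@[simp]
theorem indicatorCLM_apply (x : lp (fun _ : α => E) p) :
    ⇑(indicatorCLM 𝕜 E p s x) = s.indicator x :=
  rfl

theorem indicatorCLM_eq_self_iff {x : lp (fun _ : α => E) p} :
    indicatorCLM 𝕜 E p s x = x ↔ support x ⊆ s := by
  rw [← Set.indicator_eq_self, ← indicatorCLM_apply (𝕜 := 𝕜)]
  exact ⟨fun h => by rw [h], lp.ext⟩

theorem indicatorCLM_comp_self :
    (indicatorCLM 𝕜 E p s).comp (indicatorCLM 𝕜 E p s) = indicatorCLM 𝕜 E p s :=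
  ContinuousLinearMap.ext fun _ =>
    (indicatorCLM_eq_self_iff (𝕜 := 𝕜)).2 Set.support_indicator_subset

theorem coe_range_indicatorCLM :
    (LinearMap.range
        (indicatorCLM 𝕜 E p s : lp (fun _ : α => E) p →ₗ[𝕜] lp (fun _ : α => E) p) :
      Set (lp (fun _ : α => E) p)) = {x : lp (fun _ : α => E) p | support x ⊆ s} := by
  ext x
  refine ⟨?_, fun hx => ⟨x, indicatorCLM_eq_self_iff.2 hx⟩⟩
  rintro ⟨y, rfl⟩
  exact Set.support_indicator_subset

end lp

theorem lp.hasSCP {α E : Type*} [NormedAddCommGroup E] [NormedSpace ℝ E] [SeparableSpace E]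
    {p : ℝ≥0∞} [Fact (1 ≤ p)] (hp : p ≠ ∞) : HasSCP (lp (fun _ : α => E) p) := by
  rintro F - ⟨c, hc, hFc⟩
  set S := ⋃ x ∈ c, support x
  have hS : S.Countable := hc.biUnion fun x _ => (lp.memℓp x).countable_support hp
  have hcS : c ⊆ {x | support x ⊆ S} := fun x hx =>
    Set.subset_biUnion_of_mem (u := fun x : lp _ p => support x) hx
  refine ⟨LinearMap.range
      (lp.indicatorCLM ℝ E p S : lp (fun _ : α => E) p →ₗ[ℝ] lp (fun _ : α => E) p),
    ?_, ?_, ?_, _, lp.indicatorCLM_comp_self, rfl⟩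
  · rw [← SetLike.coe_subset_coe, lp.coe_range_indicatorCLM]
    exact hFc.trans (closure_minimal hcS (lp.isClosed_setOf_support_subset S))
  · rw [lp.coe_range_indicatorCLM]
    exact lp.isClosed_setOf_support_subset S
  · rw [lp.coe_range_indicatorCLM]
    exact lp.isSeparable_setOf_support_subset hp hS

/-- For every set `Γ` and every real `1 ≤ p < ∞`, the space `ℓ_p(Γ)` has the separable
complementation property. -/
theorem lp_hasSCP {Γ : Type*} (p : ℝ) (hp : 1 ≤ p) :
    letI : Fact (1 ≤ ENNReal.ofReal p) := ⟨ENNReal.one_le_ofReal.2 hp⟩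
    HasSCP (lp (fun _ : Γ => ℝ) (ENNReal.ofReal p)) :=
  letI : Fact (1 ≤ ENNReal.ofReal p) := ⟨ENNReal.one_le_ofReal.2 hp⟩
  lp.hasSCP ENNReal.ofReal_ne_top

end
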